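/- arXiv:1212.0714 — 9 statements merged into one kernel-verified Lean document; each statement's English description precedes it below -/
import Mathlib

section
/- Let A and B be (n,d)-types with A_i ⊆ B_i for all i ∈ [n]. Then A is a refinement of B (i.e., there exists an ordered partition P = (P_1,...,P_k) of [d] such that A_i = B_i ∩ P_{m(i)} where m(i) is the smallest index with B_i ∩ P_{m(i)} nonempty) if and only if the comparability graph CG(A,B) is acyclic. -/
open Finset

/-- An `(n,d)`-type: an `n`-tuple of subsets of `[d]`. -/
abbrev NDType (n d : ℕ) := Fin n → Finset (Fin d)

/-- All entries nonempty. -/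
def IsType {n d : ℕ} (A : NDType n d) : Prop := ∀ i, (A i).Nonempty

/-- A directed edge `u → v` of the comparability graph `CG(A,B)`:
for some coordinate `i`, `u ∈ A i`, `v ∈ B i`, and not both lie in `A i ∩ B i`. -/
def DirEdge {n d : ℕ} (A B : NDType n d) (u v : Fin d) : Prop :=
  u ≠ v ∧ ∃ i, u ∈ A i ∧ v ∈ B i ∧ ¬ (u ∈ A i ∩ B i ∧ v ∈ A i ∩ B i)

/-- An undirected edge of `CG(A,B)`: both endpoints lie in some `A i ∩ B i`. -/
def UndirEdge {n d : ℕ} (A B : NDType n d) (u v : Fin d) : Prop :=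
  u ≠ v ∧ ∃ i, u ∈ A i ∩ B i ∧ v ∈ A i ∩ B i

/-- A step of a directed walk in `CG(A,B)`: a directed edge in the right
direction, or an undirected edge. -/
def Step {n d : ℕ} (A B : NDType n d) (u v : Fin d) : Prop :=
  DirEdge A B u v ∨ UndirEdge A B u v

/-- `CG(A,B)` contains a directed cycle: a closed walk all of whose directed
edges point in the walk direction, with at least one directed edge. -/
def HasDirectedCycle {n d : ℕ} (A B : NDType n d) : Prop :=
  ∃ (k : ℕ) (v : Fin (k + 1) → Fin d),
    v 0 = v (Fin.last k) ∧
    (∀ i : Fin k, Step A B (v i.castSucc) (v i.succ)) ∧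
    (∃ i : Fin k, DirEdge A B (v i.castSucc) (v i.succ))

/-- The comparability graph `CG(A,B)` is acyclic. -/
def Acyclic {n d : ℕ} (A B : NDType n d) : Prop := ¬ HasDirectedCycle A B

/-- An ordered partition of `[d]` into `k` (nonempty, ordered) parts. -/
def IsOrderedPartition {d k : ℕ} (P : Fin k → Finset (Fin d)) : Prop :=
  (∀ a, (P a).Nonempty) ∧ (∀ a b, a ≠ b → Disjoint (P a) (P b)) ∧
    (∀ j : Fin d, ∃ a, j ∈ P a)

/-- `B` is the refinement `A|P` of `A` with respect to the ordered partition `P`: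
`B i = A i ∩ P (m i)` where `m i` is the least index with nonempty intersection. -/
def IsRefinementBy {n d k : ℕ} (A : NDType n d) (P : Fin k → Finset (Fin d))
    (B : NDType n d) : Prop :=
  ∀ i, ∃ a, (A i ∩ P a).Nonempty ∧ (∀ b, b < a → A i ∩ P b = ∅) ∧
    B i = A i ∩ P a

/-- `B` is a refinement of `A` (with respect to some ordered partition). -/
def IsRefinement {n d : ℕ} (B A : NDType n d) : Prop :=
  ∃ (k : ℕ) (P : Fin k → Finset (Fin d)),
    IsOrderedPartition P ∧ IsRefinementBy A P B

/-- A total refinement: a refinement all of whose entries are singletons. -/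
def IsTotalRefinement {n d : ℕ} (B A : NDType n d) : Prop :=
  IsRefinement B A ∧ ∀ i, ∃ j, B i = {j}

/-- A tope: a type all of whose entries are singletons. -/
def IsTope {n d : ℕ} (A : NDType n d) : Prop := ∀ i, ∃ j, A i = {j}
open Pointwise

/-- The `j`-th standard basis vector of `ℝ^d`. -/
noncomputable def stdVec {d : ℕ} (j : Fin d) : Fin d → ℝ := Pi.single j 1

/-- The Minkowski cell `C_A = Σᵢ conv{e_j : j ∈ A i} ⊆ ℝ^d` of an `(n,d)`-type. -/
noncomputable def cell {n d : ℕ} (A : NDType n d) : Set (Fin d → ℝ) :=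
  ∑ i : Fin n, convexHull ℝ (stdVec '' (A i : Set (Fin d)))

/-- The dilated simplex `nΔ^{d-1} ⊆ ℝ^d`. -/
def dilSimplex (n d : ℕ) : Set (Fin d → ℝ) :=
  {x | (∀ j, 0 ≤ x j) ∧ ∑ j, x j = (n : ℝ)}

/-- A mixed subdivision of `nΔ^{d-1}`, encoded by the set of types of its cells:
all entries of a cell type are nonempty, the family of cells is closed under
faces (= refinements), any two cells intersect in the Minkowski sum of the
intersections of their summands, and the cells cover `nΔ^{d-1}`. -/
structure MixedSubdivision (n d : ℕ) where
  cells : Set (NDType n d)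
  isType : ∀ A ∈ cells, IsType A
  refine_closed : ∀ A ∈ cells, ∀ B, IsRefinement B A → B ∈ cells
  inter : ∀ A ∈ cells, ∀ B ∈ cells,
    cell A ∩ cell B = cell (fun i => A i ∩ B i)
  covers : ⋃ A ∈ cells, cell A = dilSimplex n d

/-!
Rank the vertices of `CG(A,B)` by a function `f`. A refinement of `B` is exactly a type whose
`i`-th entry is the set of `f`-minimal elements of `B i` for some `f`: take `f` to be the index of
the part containing a vertex, and conversely partition `[d]` into the level sets of `f` in
increasing order. Steps of the graph never decrease such a rank and directed edges strictly
increase it, so there is no directed cycle. Conversely, if the graph is acyclic, the number of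
vertices from which a vertex can be reached is such a rank: a directed edge `u → v` cannot be
reversed by a walk, so strictly fewer vertices reach `u` than `v`.
-/

open Relation

section Chains

variable {α : Type*} {r : α → α → Prop}

theorem reflTransGen_of_chain {k : ℕ} {v : Fin (k + 1) → α}
    (hv : ∀ i : Fin k, r (v i.castSucc) (v i.succ)) {i j : Fin (k + 1)} (hij : i ≤ j) :
    ReflTransGen r (v i) (v j) := by
  refine (reflTransGen_of_succ_of_le (fun a b => r (v a) (v b)) (fun a ha => ?_) hij).lift v
    fun _ _ => id
  obtain ⟨a, rfl⟩ := Fin.eq_castSucc_of_ne_last (ha.2.trans_le (Fin.le_last j)).ne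
  simpa using hv a

theorem chain_cons {k : ℕ} {a : α} {v : Fin (k + 1) → α} (ha : r a (v 0))
    (hv : ∀ i : Fin k, r (v i.castSucc) (v i.succ)) (i : Fin (k + 1)) :
    r ((Fin.cons a v : Fin (k + 2) → α) i.castSucc)
      ((Fin.cons a v : Fin (k + 2) → α) i.succ) := by
  cases i using Fin.cases with
  | zero => simpa using ha
  | succ i => simpa [← Fin.succ_castSucc] using hv i

theorem exists_chain_of_reflTransGen {a b : α} (h : ReflTransGen r a b) :
    ∃ (k : ℕ) (v : Fin (k + 1) → α), v 0 = a ∧ v (Fin.last k) = b ∧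
      ∀ i : Fin k, r (v i.castSucc) (v i.succ) := by
  induction h using ReflTransGen.head_induction_on with
  | refl => exact ⟨0, fun _ => b, rfl, rfl, Fin.elim0⟩
  | head hac _ ih =>
    obtain ⟨k, v, h0, hlast, hv⟩ := ih
    exact ⟨k + 1, Fin.cons _ v, rfl, by rw [← Fin.succ_last, Fin.cons_succ, hlast],
      chain_cons (h0 ▸ hac) hv⟩

end Chains

section ReachCount

variable {α : Type*} [Finite α] {r : α → α → Prop}

noncomputable def reachCount (r : α → α → Prop) (v : α) : ℕ :=
  Set.ncard {u | ReflTransGen r u v}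

theorem reachCount_le {u v : α} (h : ReflTransGen r u v) : reachCount r u ≤ reachCount r v :=
  Set.ncard_le_ncard (fun _ hw => hw.trans h) (Set.toFinite _)

theorem reachCount_lt {u v : α} (h : ReflTransGen r u v) (h' : ¬ ReflTransGen r v u) :
    reachCount r u < reachCount r v :=
  Set.ncard_lt_ncard ⟨fun _ hw => hw.trans h, fun hss => h' (hss ReflTransGen.refl)⟩
    (Set.toFinite _)

end ReachCount

section Graph

variable {n d : ℕ} {A B : NDType n d}

theorem hasDirectedCycle_iff :
    HasDirectedCycle A B ↔ ∃ u v, DirEdge A B u v ∧ ReflTransGen (Step A B) v u := by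
  constructor
  · rintro ⟨k, v, h0, hstep, i, hi⟩
    refine ⟨_, _, hi, (reflTransGen_of_chain hstep (Fin.le_last _)).trans ?_⟩
    rw [← h0]
    exact reflTransGen_of_chain hstep (Fin.zero_le _)
  · rintro ⟨u, v, huv, hvu⟩
    obtain ⟨k, w, h0, hlast, hw⟩ := exists_chain_of_reflTransGen hvu
    refine ⟨k + 1, Fin.cons u w, ?_, chain_cons (h0 ▸ Or.inl huv) hw, 0, by simpa [h0]⟩
    rw [← Fin.succ_last, Fin.cons_succ, hlast, Fin.cons_zero]

theorem step_of_mem (hsub : ∀ i, A i ⊆ B i) {i : Fin n} {u v : Fin d} (hu : u ∈ A i)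
    (hv : v ∈ B i) (huv : u ≠ v) : Step A B u v := by
  by_cases hvA : v ∈ A i
  · exact Or.inr ⟨huv, i, mem_inter.2 ⟨hu, hsub i hu⟩, mem_inter.2 ⟨hvA, hv⟩⟩
  · exact Or.inl ⟨huv, i, hu, hv, fun h => hvA (mem_inter.1 h.2).1⟩

end Graph

def IsMinimaBy {n d : ℕ} {α : Type*} [LinearOrder α] (f : Fin d → α) (A B : NDType n d) :
    Prop :=
  ∀ i, A i = {x ∈ B i | ∀ y ∈ B i, f x ≤ f y}

namespace IsMinimaBy

variable {n d : ℕ} {α : Type*} [LinearOrder α] {f : Fin d → α} {A B : NDType n d}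

theorem mem_iff (hf : IsMinimaBy f A B) {i : Fin n} {x : Fin d} :
    x ∈ A i ↔ x ∈ B i ∧ ∀ y ∈ B i, f x ≤ f y := by
  rw [hf i, mem_filter]

theorem step_le (hf : IsMinimaBy f A B) {x y : Fin d} : Step A B x y → f x ≤ f y := by
  rintro (⟨-, i, hx, hy, -⟩ | ⟨-, i, hx, hy⟩)
  · exact (hf.mem_iff.1 hx).2 y hy
  · exact (hf.mem_iff.1 (mem_inter.1 hx).1).2 y (mem_inter.1 hy).2

theorem dirEdge_lt (hf : IsMinimaBy f A B) {x y : Fin d} : DirEdge A B x y → f x < f y := by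
  rintro ⟨-, i, hx, hy, hxy⟩
  have hxB := (hf.mem_iff.1 hx).1
  have hyA : y ∉ A i := fun hyA => hxy ⟨mem_inter.2 ⟨hx, hxB⟩, mem_inter.2 ⟨hyA, hy⟩⟩
  obtain ⟨z, hz, hzy⟩ : ∃ z ∈ B i, f z < f y := by
    simpa [hf.mem_iff, hy] using hyA
  exact ((hf.mem_iff.1 hx).2 z hz).trans_lt hzy

theorem acyclic (hf : IsMinimaBy f A B) : Acyclic A B := by
  rw [Acyclic, hasDirectedCycle_iff]
  rintro ⟨u, v, huv, hvu⟩
  have hmono : ∀ {a b}, ReflTransGen (Step A B) a b → f a ≤ f b := fun h => by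
    induction h with
    | refl => exact le_rfl
    | tail _ hstep ih => exact ih.trans (hf.step_le hstep)
  exact (hf.dirEdge_lt huv).not_ge (hmono hvu)

end IsMinimaBy

section LevelPartition

variable {d : ℕ} {α : Type*} [LinearOrder α]

def levelPartition (f : Fin d → α) : Fin (univ.image f).card → Finset (Fin d) :=
  fun a => univ.filter fun x => f x = (univ.image f).orderIsoOfFin rfl a

theorem mem_levelPartition {f : Fin d → α} {a : Fin (univ.image f).card} {x : Fin d} :
    x ∈ levelPartition f a ↔ f x = (univ.image f).orderIsoOfFin rfl a :=
  mem_filter_univ x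

theorem isOrderedPartition_levelPartition (f : Fin d → α) :
    IsOrderedPartition (levelPartition f) := by
  set e := (univ.image f).orderIsoOfFin rfl
  refine ⟨fun a => ?_, fun a b hab => ?_, fun x => ?_⟩
  · obtain ⟨x, -, hx⟩ := mem_image.1 (e a).2
    exact ⟨x, mem_levelPartition.2 hx⟩
  · refine disjoint_left.2 fun x hxa hxb => hab (e.injective (Subtype.ext ?_))
    rw [← mem_levelPartition.1 hxa, ← mem_levelPartition.1 hxb]
  · refine ⟨e.symm ⟨f x, mem_image_of_mem f (mem_univ x)⟩, mem_levelPartition.2 ?_⟩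
    rw [e.apply_symm_apply]

end LevelPartition

theorem isRefinement_of_isMinimaBy {n d : ℕ} {α : Type*} [LinearOrder α] {f : Fin d → α}
    {A B : NDType n d} (hB : IsType B) (hf : IsMinimaBy f A B) : IsRefinement A B := by
  refine ⟨_, levelPartition f, isOrderedPartition_levelPartition f, fun i => ?_⟩
  set e := (univ.image f).orderIsoOfFin rfl
  set m := ((B i).image f).min' ((hB i).image f)
  have hm : m ∈ univ.image f := image_subset_image (subset_univ _) (min'_mem _ _)
  have hle : ∀ y ∈ B i, m ≤ f y := fun y hy => min'_le _ _ (mem_image_of_mem f hy)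
  refine ⟨e.symm ⟨m, hm⟩, ?_, fun b hb => ?_, ?_⟩
  · obtain ⟨y, hy, hym⟩ := mem_image.1 (min'_mem _ ((hB i).image f))
    exact ⟨y, mem_inter.2 ⟨hy, mem_levelPartition.2 (by rw [e.apply_symm_apply]; exact hym)⟩⟩
  · have hlt : e b < ⟨m, hm⟩ := by simpa only [e.apply_symm_apply] using e.lt_iff_lt.2 hb
    refine eq_empty_of_forall_notMem fun y hy => ?_
    obtain ⟨hyB, hyb⟩ := mem_inter.1 hy
    exact (hle y hyB).not_gt (mem_levelPartition.1 hyb ▸ hlt)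
  · ext x
    rw [hf.mem_iff, mem_inter, mem_levelPartition, e.apply_symm_apply]
    refine and_congr_right fun hx => ⟨fun hmin => (hle x hx).antisymm' ?_, fun hxm y hy => ?_⟩
    · exact le_min' _ _ _ (forall_mem_image.2 hmin)
    · exact hxm ▸ hle y hy

theorem IsOrderedPartition.eq_of_mem {d k : ℕ} {P : Fin k → Finset (Fin d)}
    (hP : IsOrderedPartition P) {a b : Fin k} {x : Fin d} (ha : x ∈ P a) (hb : x ∈ P b) :
    a = b := by
  by_contra hab
  exact disjoint_left.1 (hP.2.1 a b hab) ha hb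

theorem IsRefinement.exists_isMinimaBy {n d : ℕ} {A B : NDType n d} (h : IsRefinement A B) :
    ∃ (k : ℕ) (f : Fin d → Fin k), IsMinimaBy f A B := by
  obtain ⟨k, P, hP, href⟩ := h
  choose f hf using hP.2.2
  refine ⟨k, f, fun i => ?_⟩
  obtain ⟨a, ⟨z, hz⟩, hmin, hAi⟩ := href i
  obtain ⟨hzB, hza⟩ := mem_inter.1 hz
  have hle : ∀ y ∈ B i, a ≤ f y := fun y hy => not_lt.1 fun hlt =>
    (eq_empty_iff_forall_notMem.1 (hmin _ hlt)) y (mem_inter.2 ⟨hy, hf y⟩)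
  ext x
  rw [hAi, mem_inter, mem_filter]
  refine and_congr_right fun hx => ⟨fun hxa y hy => ?_, fun hxmin => ?_⟩
  · exact hP.eq_of_mem (hf x) hxa ▸ hle y hy
  · have hfx : f x = a :=
      ((hxmin z hzB).trans (hP.eq_of_mem (hf z) hza).le).antisymm (hle x hx)
    exact hfx ▸ hf x

theorem exists_isMinimaBy_of_acyclic {n d : ℕ} {A B : NDType n d} (hA : IsType A)
    (hsub : ∀ i, A i ⊆ B i) (hac : Acyclic A B) : ∃ f : Fin d → ℕ, IsMinimaBy f A B := by
  refine ⟨reachCount (Step A B), fun i => ?_⟩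
  obtain ⟨u, hu⟩ := hA i
  have hle : ∀ {x y}, x ∈ A i → y ∈ B i →
      reachCount (Step A B) x ≤ reachCount (Step A B) y := fun {x y} hx hy => by
    rcases eq_or_ne x y with rfl | hxy
    · exact le_rfl
    · exact reachCount_le (ReflTransGen.single (step_of_mem hsub hx hy hxy))
  ext x
  rw [mem_filter]
  refine ⟨fun hx => ⟨hsub i hx, fun y => hle hx⟩, fun ⟨hxB, hxmin⟩ => ?_⟩
  by_contra hxA
  have hux : u ≠ x := fun h => hxA (h ▸ hu)
  have hdir : DirEdge A B u x := ⟨hux, i, hu, hxB, fun h => hxA (mem_inter.1 h.2).1⟩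
  have hlt := reachCount_lt (r := Step A B) (ReflTransGen.single (Or.inl hdir))
    fun hxu => hac (hasDirectedCycle_iff.2 ⟨u, x, hdir, hxu⟩)
  exact (hxmin u (hsub i hu)).not_gt hlt

theorem refinement_iff_acyclic_general {n d : ℕ} (A B : NDType n d)
    (hA : IsType A) (hsub : ∀ i, A i ⊆ B i) :
    IsRefinement A B ↔ Acyclic A B := by
  constructor
  · intro href
    obtain ⟨_, f, hf⟩ := href.exists_isMinimaBy
    exact hf.acyclic
  · intro hac
    obtain ⟨f, hf⟩ := exists_isMinimaBy_of_acyclic hA hsub hac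
    exact isRefinement_of_isMinimaBy (fun i => (hA i).mono (hsub i)) hf

/-- For `(n,d)`-types `A ⊆ B` (componentwise), `A` is a
refinement of `B` iff the comparability graph `CG(A,B)` is acyclic. -/
theorem refinement_iff_acyclic {n d : ℕ} (A B : NDType n d)
    (hA : IsType A) (hB : IsType B) (hsub : ∀ i, A i ⊆ B i) :
    IsRefinement A B ↔ Acyclic A B :=
  refinement_iff_acyclic_general A B hA hsub
end

section
/- Let A and B be (n,d)-types such that the comparability graph CG(A,B) is acyclic. Then the comparability graph CG(A, A∩B) is also acyclic, where A∩B denotes the componentwise intersection (A_1∩B_1,...,A_n∩B_n), provided that each A_i ∩ B_i is nonempty. -/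
open Finset

open Pointwise

/-! Shrinking `B` to some `B'` with `A ⊓ B ≤ B' ≤ B` only deletes edges of `CG(A,B)` and never
turns a directed edge into an undirected one, so a directed cycle of `CG(A,B')` is one of
`CG(A,B)`. -/

section

variable {n d : ℕ} {A B B' : NDType n d} {u v : Fin d}

theorem DirEdge.of_le (hle : B' ≤ B) (hge : A ⊓ B ≤ B') (h : DirEdge A B' u v) :
    DirEdge A B u v := by
  obtain ⟨huv, i, hu, hv, hnot⟩ := h
  refine ⟨huv, i, hu, hle i hv, fun ⟨huAB, hvAB⟩ => hnot ⟨?_, ?_⟩⟩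
  · exact mem_inter.2 ⟨hu, hge i huAB⟩
  · exact mem_inter.2 ⟨(mem_inter.1 hvAB).1, hv⟩

theorem UndirEdge.of_le (hle : B' ≤ B) (h : UndirEdge A B' u v) : UndirEdge A B u v := by
  obtain ⟨huv, i, hu, hv⟩ := h
  exact ⟨huv, i, inter_subset_inter_left (hle i) hu,
    inter_subset_inter_left (hle i) hv⟩

theorem Step.of_le (hle : B' ≤ B) (hge : A ⊓ B ≤ B') (h : Step A B' u v) : Step A B u v :=
  h.imp (DirEdge.of_le hle hge) (UndirEdge.of_le hle)

theorem HasDirectedCycle.of_le (hle : B' ≤ B) (hge : A ⊓ B ≤ B') (h : HasDirectedCycle A B') :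
    HasDirectedCycle A B := by
  obtain ⟨k, v, hclosed, hstep, i, hdir⟩ := h
  exact ⟨k, v, hclosed, fun j => (hstep j).of_le hle hge, i, hdir.of_le hle hge⟩

theorem Acyclic.of_le (h : Acyclic A B) (hle : B' ≤ B) (hge : A ⊓ B ≤ B') : Acyclic A B' :=
  fun hcyc => h (hcyc.of_le hle hge)

end

theorem acyclic_componentwise_inter_general {n d : ℕ} (A B : NDType n d)
    (h : Acyclic A B) :
    Acyclic A (fun i => A i ∩ B i) :=
  h.of_le (fun _ => inter_subset_right) le_rfl

/-- If `CG(A,B)` is acyclic and every `A i ∩ B i` is nonempty,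
then `CG(A, A∩B)` is acyclic. -/
theorem acyclic_componentwise_inter {n d : ℕ} (A B : NDType n d)
    (hA : IsType A) (hB : IsType B)
    (hne : ∀ i, (A i ∩ B i).Nonempty) (h : Acyclic A B) :
    Acyclic A (fun i => A i ∩ B i) :=
  acyclic_componentwise_inter_general A B h
end

section
/- For any (n,d)-type B and any ordered partition P of [d], the refinement A = B|P satisfies: the comparability graph CG(A,B) is acyclic. -/
open Finset

open Pointwise

/-- For any type `B` and ordered partition `P`, the refinement
`A = B|P` has acyclic comparability graph `CG(A,B)`. -/
theorem refinement_acyclic {n d k : ℕ} (B : NDType n d) (hB : IsType B)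
    (P : Fin k → Finset (Fin d)) (hP : IsOrderedPartition P)
    (A : NDType n d) (hA : IsRefinementBy B P A) :
    Acyclic A B := by
  classical
  rintro ⟨m, v, hclose, hstep, i0, hdir⟩
  obtain ⟨hne, hdisj, hcover⟩ := hP
  choose f hf using hcover
  have funiq : ∀ (j : Fin d) (a : Fin k), j ∈ P a → f j = a := by
    intro j a hj
    by_contra h
    exact absurd ((hdisj _ _ h).le_bot (Finset.mem_inter.2 ⟨hf j, hj⟩)) (Finset.notMem_empty j)
  -- key: directed edge strictly increases f, undirected keeps it equal
  have key_lt : ∀ u w, DirEdge A B u w → f u < f w := by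
    rintro u w ⟨-, i, hu, hw, hnb⟩
    obtain ⟨a, hane, hmin, hAi⟩ := hA i
    have huP : u ∈ P a := (Finset.mem_inter.1 (hAi ▸ hu)).2
    have huB : u ∈ B i := (Finset.mem_inter.1 (hAi ▸ hu)).1
    have hfu : f u = a := funiq u a huP
    have hwA : w ∉ A i := by
      intro hwA
      exact hnb ⟨Finset.mem_inter.2 ⟨hu, huB⟩, Finset.mem_inter.2 ⟨hwA, hw⟩⟩
    have hwP : w ∈ P (f w) := hf w
    have hle : a ≤ f w := by
      by_contra h
      have : B i ∩ P (f w) = ∅ := hmin _ (lt_of_not_ge h)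
      exact absurd this (Finset.nonempty_iff_ne_empty.1 ⟨w, Finset.mem_inter.2 ⟨hw, hwP⟩⟩)
    have hne' : f w ≠ a := by
      intro h
      exact hwA (hAi ▸ Finset.mem_inter.2 ⟨hw, h ▸ hwP⟩)
    rw [hfu]
    exact lt_of_le_of_ne hle (Ne.symm hne')
  have key_le : ∀ u w, Step A B u w → f u ≤ f w := by
    rintro u w (h | ⟨-, i, hu, hw⟩)
    · exact (key_lt u w h).le
    · obtain ⟨a, hane, hmin, hAi⟩ := hA i
      have huP : u ∈ P a := (Finset.mem_inter.1 (hAi ▸ (Finset.mem_inter.1 hu).1)).2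
      have hwP : w ∈ P a := (Finset.mem_inter.1 (hAi ▸ (Finset.mem_inter.1 hw).1)).2
      rw [funiq u a huP, funiq w a hwP]
  have hmono : Monotone (fun j : Fin (m + 1) => f (v j)) :=
    Fin.monotone_iff_le_succ.2 fun i => key_le _ _ (hstep i)
  have h1 : f (v i0.castSucc) < f (v i0.succ) := key_lt _ _ hdir
  have h2 : f (v i0.succ) ≤ f (v (Fin.last m)) := hmono (Fin.le_last _)
  have h3 : f (v 0) ≤ f (v i0.castSucc) := hmono (Fin.zero_le _)
  rw [hclose] at h3
  exact absurd (h1.trans_le h2) (not_lt.2 h3)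
end

section
/- Let M be a tropical oriented matroid with parameters (n,d). For each j ∈ [d], the contraction M/j, consisting of all types of M that do not contain j in any coordinate, satisfies the boundary, comparability, and surrounding axioms for parameters (n,d-1) (identifying [d]∖{j} with [d-1]). -/
open Finset

open Pointwise

/-- A tropical oriented matroid with parameters `(n,d)`. -/
structure TOM (n d : ℕ) where
  types : Set (NDType n d)
  isType : ∀ A ∈ types, IsType A
  boundary : ∀ j : Fin d, (fun _ => ({j} : Finset (Fin d))) ∈ types
  comparability : ∀ A ∈ types, ∀ B ∈ types, Acyclic A B
  elimination : ∀ A ∈ types, ∀ B ∈ types, ∀ j : Fin n, ∃ C ∈ types,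
    C j = A j ∪ B j ∧ ∀ k, C k = A k ∨ C k = B k ∨ C k = A k ∪ B k
  surrounding : ∀ A ∈ types, ∀ B, IsRefinement B A → B ∈ types

lemma mem_image_succAbove {d : ℕ} (j : Fin (d+1)) (S : Finset (Fin d)) (u : Fin d) :
    j.succAbove u ∈ S.image j.succAbove ↔ u ∈ S :=
  Function.Injective.mem_finset_image Fin.succAbove_right_injective

lemma dirEdge_lift {n d : ℕ} (j : Fin (d+1)) (A B : NDType n (d+1)) (A' B' : NDType n d)
    (hA : ∀ i, A i = (A' i).image j.succAbove) (hB : ∀ i, B i = (B' i).image j.succAbove)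
    {u v : Fin d} (h : DirEdge A' B' u v) :
    DirEdge A B (j.succAbove u) (j.succAbove v) := by
  obtain ⟨hne, i, hu, hv, hno⟩ := h
  refine ⟨fun hc => hne (Fin.succAbove_right_injective hc), i, ?_, ?_, ?_⟩
  · rw [hA]; exact (mem_image_succAbove j _ u).2 hu
  · rw [hB]; exact (mem_image_succAbove j _ v).2 hv
  · simp only [Finset.mem_inter, hA, hB, mem_image_succAbove] at *
    exact hno

lemma undirEdge_lift {n d : ℕ} (j : Fin (d+1)) (A B : NDType n (d+1)) (A' B' : NDType n d)
    (hA : ∀ i, A i = (A' i).image j.succAbove) (hB : ∀ i, B i = (B' i).image j.succAbove)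
    {u v : Fin d} (h : UndirEdge A' B' u v) :
    UndirEdge A B (j.succAbove u) (j.succAbove v) := by
  obtain ⟨hne, i, hu, hv⟩ := h
  refine ⟨fun hc => hne (Fin.succAbove_right_injective hc), i, ?_, ?_⟩ <;>
    simp only [Finset.mem_inter, hA, hB, mem_image_succAbove] at * <;> tauto

/-- The contraction `M/j` of a tropical oriented matroid,
consisting of all types of `M` avoiding `j` in every coordinate (with
`[d+1] \ {j}` identified with `[d]` via `Fin.succAbove j`), satisfies the
boundary, comparability and surrounding axioms for parameters `(n, d)`. -/
theorem contraction_axioms {n d : ℕ} (M : TOM n (d + 1)) (j : Fin (d + 1)) :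
    ∀ C : Set (NDType n d),
      C = {A' | ∃ A ∈ M.types, (∀ i, j ∉ A i) ∧
            ∀ i, A i = (A' i).image j.succAbove} →
      ((∀ l : Fin d, (fun _ => ({l} : Finset (Fin d))) ∈ C) ∧
       (∀ A ∈ C, ∀ B ∈ C, Acyclic A B) ∧
       (∀ A ∈ C, ∀ B, IsRefinement B A → B ∈ C)) := by
  intro C hC
  subst hC
  refine ⟨?_, ?_, ?_⟩
  · -- boundary
    intro l
    refine ⟨fun _ => {j.succAbove l}, M.boundary (j.succAbove l), fun i => ?_, fun i => by simp⟩
    simp [Fin.succAbove_ne j l, (Fin.succAbove_ne j l).symm]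
  · -- comparability
    rintro A' ⟨A, hA, hjA, hAim⟩ B' ⟨B, hB, hjB, hBim⟩ hcyc
    apply M.comparability A hA B hB
    obtain ⟨k, v, h0, hs, i0, hd⟩ := hcyc
    refine ⟨k, fun i => j.succAbove (v i), congrArg _ h0, fun i => ?_, i0,
      dirEdge_lift j A B A' B' hAim hBim hd⟩
    rcases hs i with h | h
    · exact Or.inl (dirEdge_lift j A B A' B' hAim hBim h)
    · exact Or.inr (undirEdge_lift j A B A' B' hAim hBim h)
  · -- surrounding
    rintro A' ⟨A, hA, hjA, hAim⟩ B' ⟨k, P, ⟨hPne, hPdisj, hPcov⟩, href⟩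
    refine ⟨fun i => (B' i).image j.succAbove, ?_, fun i => ?_, fun i => rfl⟩
    · apply M.surrounding A hA
      refine ⟨k+1, Fin.cases {j} (fun a => (P a).image j.succAbove), ⟨?_, ?_, ?_⟩, ?_⟩
      · intro a
        induction a using Fin.cases with
        | zero => simp
        | succ a => simpa using (hPne a).image j.succAbove
      · intro a b hab
        induction a using Fin.cases with
        | zero =>
          induction b using Fin.cases with
          | zero => exact absurd rfl hab
          | succ b =>
            simp only [Fin.cases_zero, Fin.cases_succ, Finset.disjoint_singleton_left,
              Finset.mem_image]
            rintro ⟨x, -, hx⟩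
            exact Fin.succAbove_ne j x hx
        | succ a =>
          induction b using Fin.cases with
          | zero =>
            simp only [Fin.cases_zero, Fin.cases_succ, Finset.disjoint_singleton_right,
              Finset.mem_image]
            rintro ⟨x, -, hx⟩
            exact Fin.succAbove_ne j x hx
          | succ b =>
            simp only [Fin.cases_succ]
            rw [Finset.disjoint_image Fin.succAbove_right_injective]
            exact hPdisj a b (fun h => hab (by rw [h]))
      · intro x
        by_cases hx : x = j
        · exact ⟨0, by simp [hx]⟩
        · obtain ⟨y, hy⟩ := Fin.exists_succAbove_eq hx
          obtain ⟨a, ha⟩ := hPcov y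
          exact ⟨a.succ, by simp only [Fin.cases_succ]; exact hy ▸ Finset.mem_image_of_mem _ ha⟩
      · intro i
        obtain ⟨a, hne, hlt, hBeq⟩ := href i
        refine ⟨a.succ, ?_, ?_, ?_⟩
        · simp only [Fin.cases_succ, hAim,
            ← Finset.image_inter _ _ Fin.succAbove_right_injective]
          exact hne.image _
        · intro b hb
          induction b using Fin.cases with
          | zero =>
            simp only [Fin.cases_zero, Finset.eq_empty_iff_forall_notMem, Finset.mem_inter,
              Finset.mem_singleton]
            rintro x ⟨hx1, rfl⟩
            exact hjA i hx1
          | succ b =>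
            have hblt : b < a := by
              simpa [Fin.succ_lt_succ_iff] using hb
            simp only [Fin.cases_succ, hAim,
              ← Finset.image_inter _ _ Fin.succAbove_right_injective, hlt b hblt,
              Finset.image_empty]
        · simp only [Fin.cases_succ, hAim,
            ← Finset.image_inter _ _ Fin.succAbove_right_injective, hBeq]
    · simp only [Finset.mem_image, not_exists]
      rintro x ⟨-, hx⟩
      exact Fin.succAbove_ne j x hx
end

section
/- Let A and B be (n,d)-types, and view them as Minkowski cells C_A = Σ_i conv{e_j : j ∈ A_i} and C_B = Σ_i conv{e_j : j ∈ B_i} inside the dilated simplex nΔ^{d-1} ⊂ ℝ^d. If the comparability graph CG(A,B) is acyclic and every A_i ∩ B_i is nonempty, then C_A ∩ C_B = C_{A∩B}, the Minkowski cell of the componentwise intersection. -/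
open Finset

open Pointwise

/-!
Acyclicity of `CG(A,B)` yields a potential `φ : [d] → ℝ`, weakly increasing along every edge and
strictly increasing along directed ones (count the vertices from which a vertex is reachable).
Write `x = ∑ cᵢ = ∑ bᵢ` with `cᵢ ∈ conv{e_j : j ∈ Aᵢ}` and `bᵢ ∈ conv{e_j : j ∈ Bᵢ}`. Every
`u ∈ Aᵢ` and `v ∈ Bᵢ` satisfy `φ u ≤ φ v`, so `⟪φ, cᵢ⟫ ≤ ⟪φ, bᵢ⟫`; summing over `i` both sides
give `⟪φ, x⟫`, so all these are equalities. A weight of `cᵢ` on some `u ∉ Bᵢ` would create a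
directed edge from `u` to the support of `bᵢ` and make the inequality strict, hence each `cᵢ`
already lies in `conv{e_j : j ∈ Aᵢ ∩ Bᵢ}`.
-/

theorem Fin.cons_chain {α : Type*} {r : α → α → Prop} {k : ℕ} {a : α} {w : Fin (k + 1) → α}
    (ha : r a (w 0)) (hw : ∀ i : Fin k, r (w i.castSucc) (w i.succ)) (i : Fin (k + 1)) :
    r ((Fin.cons a w : Fin (k + 2) → α) i.castSucc) ((Fin.cons a w : Fin (k + 2) → α) i.succ) := by
  induction i using Fin.cases with
  | zero => exact ha
  | succ i => simpa [← Fin.succ_castSucc] using hw i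

theorem Relation.ReflTransGen.exists_fin_chain {α : Type*} {r : α → α → Prop} {a b : α}
    (h : Relation.ReflTransGen r a b) :
    ∃ (k : ℕ) (w : Fin (k + 1) → α), w 0 = a ∧ w (Fin.last k) = b ∧
      ∀ i : Fin k, r (w i.castSucc) (w i.succ) := by
  induction h using Relation.ReflTransGen.head_induction_on with
  | refl => exact ⟨0, fun _ => b, rfl, rfl, Fin.elim0⟩
  | head hac _ ih =>
    obtain ⟨k, w, rfl, hlast, hw⟩ := ih
    exact ⟨k + 1, Fin.cons _ w, rfl, by rw [← Fin.succ_last, Fin.cons_succ, hlast],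
      Fin.cons_chain hac hw⟩

theorem exists_rank_of_not_reflTransGen {α : Type*} [Fintype α] {r s : α → α → Prop}
    (hsr : ∀ u v, s u v → r u v) (hs : ∀ u v, s u v → ¬ Relation.ReflTransGen r v u) :
    ∃ φ : α → ℕ, (∀ u v, r u v → φ u ≤ φ v) ∧ ∀ u v, s u v → φ u < φ v := by
  classical
  let reach (v : α) : Finset α := {w | Relation.ReflTransGen r w v}
  have hmono : ∀ {u v}, r u v → reach u ⊆ reach v :=
    fun huv w => by simpa [reach] using fun hw : Relation.ReflTransGen r w _ => hw.tail huv
  refine ⟨fun v => #(reach v), fun u v huv => card_le_card (hmono huv),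
    fun u v huv => card_lt_card ⟨hmono (hsr u v huv), fun hsub => hs u v huv ?_⟩⟩
  simpa [reach] using hsub (mem_filter.2 ⟨mem_univ v, Relation.ReflTransGen.refl⟩)

section Potential

variable {n d : ℕ} {A B : NDType n d}

theorem Acyclic.not_reflTransGen_step (h : Acyclic A B) {u v : Fin d} (huv : DirEdge A B u v) :
    ¬ Relation.ReflTransGen (Step A B) v u := fun hvu => by
  obtain ⟨k, w, rfl, hlast, hw⟩ := hvu.exists_fin_chain
  exact h ⟨k + 1, Fin.cons u w, by rw [← Fin.succ_last, Fin.cons_succ, hlast]; rfl,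
    Fin.cons_chain (Or.inl huv) hw, ⟨0, huv⟩⟩

structure IsPotential (A B : NDType n d) (φ : Fin d → ℝ) : Prop where
  le_of_step : ∀ u v, Step A B u v → φ u ≤ φ v
  lt_of_dirEdge : ∀ u v, DirEdge A B u v → φ u < φ v

theorem Acyclic.exists_isPotential (h : Acyclic A B) : ∃ φ, IsPotential A B φ := by
  obtain ⟨φ, hle, hlt⟩ := exists_rank_of_not_reflTransGen (fun _ _ => Or.inl)
    fun _ _ => h.not_reflTransGen_step
  exact ⟨fun j => φ j, fun u v huv => Nat.cast_le.2 (hle u v huv),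
    fun u v huv => Nat.cast_lt.2 (hlt u v huv)⟩

theorem IsPotential.le_of_mem {φ : Fin d → ℝ} (hφ : IsPotential A B φ) {i : Fin n} {u v : Fin d}
    (hu : u ∈ A i) (hv : v ∈ B i) : φ u ≤ φ v := by
  rcases eq_or_ne u v with rfl | huv
  · rfl
  by_cases hboth : u ∈ A i ∩ B i ∧ v ∈ A i ∩ B i
  · exact hφ.le_of_step u v (Or.inr ⟨huv, i, hboth⟩)
  · exact hφ.le_of_step u v (Or.inl ⟨huv, i, hu, hv, hboth⟩)

end Potential

theorem mem_convexHull_stdVec_iff {d : ℕ} {S : Finset (Fin d)} {y : Fin d → ℝ} :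
    y ∈ convexHull ℝ (stdVec '' (S : Set (Fin d))) ↔
      y ∈ stdSimplex ℝ (Fin d) ∧ ∀ j, y j ≠ 0 → j ∈ S := by
  constructor
  · refine fun hy => convexHull_min
      (t := stdSimplex ℝ (Fin d) ∩ {y | ∀ j, y j ≠ 0 → j ∈ S}) ?_ ?_ hy
    · rintro _ ⟨j, hj, rfl⟩
      refine ⟨single_mem_stdSimplex ℝ j, fun k hk => ?_⟩
      obtain rfl : k = j := by_contra fun hkj => hk (Pi.single_eq_of_ne hkj 1)
      exact hj
    · refine (convex_stdSimplex ℝ _).inter fun y hy z hz a b _ _ _ j hj => ?_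
      by_contra hjS
      simp [not_imp_comm.1 (hy j) hjS, not_imp_comm.1 (hz j) hjS] at hj
  · rintro ⟨⟨hy0, hy1⟩, hyS⟩
    have hsum : ∑ j ∈ S, y j = 1 := by
      rw [← hy1]
      exact sum_subset (subset_univ S) fun j _ hj => not_imp_comm.1 (hyS j) hj
    have hy : ∑ j ∈ S, y j • stdVec j = y := by
      ext k
      simp only [Finset.sum_apply, Pi.smul_apply, stdVec, Pi.single_apply, smul_eq_mul, mul_ite,
        mul_one, mul_zero, sum_ite_eq]
      exact ite_eq_left_iff.2 fun hk => (not_imp_comm.1 (hyS k) hk).symm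
    exact hy ▸ (convex_convexHull ℝ _).sum_mem (fun j _ => hy0 j) hsum
      fun j hj => subset_convexHull ℝ _ ⟨j, hj, rfl⟩

section DotProduct

variable {ι : Type*} [Fintype ι] {φ c b : ι → ℝ}

theorem dotProduct_sub_dotProduct_eq_sum (hc : ∑ u, c u = 1) (hb : ∑ v, b v = 1) :
    φ ⬝ᵥ b - φ ⬝ᵥ c = ∑ u, ∑ v, c u * b v * (φ v - φ u) := by
  have hsplit : ∑ u, ∑ v, c u * b v * (φ v - φ u) =
      (∑ u, c u) * (∑ v, b v * φ v) - (∑ u, c u * φ u) * ∑ v, b v := by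
    simp only [sum_mul_sum, ← sum_sub_distrib]
    exact sum_congr rfl fun u _ => sum_congr rfl fun v _ => by ring
  simp only [hsplit, hc, hb, one_mul, mul_one, dotProduct, mul_comm (φ _)]

theorem mul_mul_sub_nonneg_of_stdSimplex (hc : c ∈ stdSimplex ℝ ι) (hb : b ∈ stdSimplex ℝ ι)
    (h : ∀ u v, c u ≠ 0 → b v ≠ 0 → φ u ≤ φ v) (u v : ι) : 0 ≤ c u * b v * (φ v - φ u) := by
  rcases eq_or_ne (c u) 0 with hu | hu
  · simp [hu]
  rcases eq_or_ne (b v) 0 with hv | hv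
  · simp [hv]
  exact mul_nonneg (mul_nonneg (hc.1 u) (hb.1 v)) (sub_nonneg.2 (h u v hu hv))

theorem dotProduct_le_dotProduct_of_stdSimplex (hc : c ∈ stdSimplex ℝ ι)
    (hb : b ∈ stdSimplex ℝ ι) (h : ∀ u v, c u ≠ 0 → b v ≠ 0 → φ u ≤ φ v) : φ ⬝ᵥ c ≤ φ ⬝ᵥ b := by
  rw [← sub_nonneg, dotProduct_sub_dotProduct_eq_sum hc.2 hb.2]
  exact sum_nonneg fun u _ => sum_nonneg fun v _ => mul_mul_sub_nonneg_of_stdSimplex hc hb h u v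

theorem dotProduct_lt_dotProduct_of_stdSimplex (hc : c ∈ stdSimplex ℝ ι)
    (hb : b ∈ stdSimplex ℝ ι) (h : ∀ u v, c u ≠ 0 → b v ≠ 0 → φ u ≤ φ v) {u v : ι}
    (hu : c u ≠ 0) (hv : b v ≠ 0) (huv : φ u < φ v) : φ ⬝ᵥ c < φ ⬝ᵥ b := by
  have hterm := mul_mul_sub_nonneg_of_stdSimplex hc hb h
  have huv_pos : 0 < c u * b v * (φ v - φ u) :=
    mul_pos (mul_pos ((hc.1 u).lt_of_ne' hu) ((hb.1 v).lt_of_ne' hv)) (sub_pos.2 huv)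
  rw [← sub_pos, dotProduct_sub_dotProduct_eq_sum hc.2 hb.2]
  exact sum_pos' (fun u _ => sum_nonneg fun v _ => hterm u v)
    ⟨u, mem_univ u, sum_pos' (fun v _ => hterm u v) ⟨v, mem_univ v, huv_pos⟩⟩

end DotProduct

section Cell

variable {n d : ℕ} {A B : NDType n d} {φ : Fin d → ℝ} {i : Fin n} {c b : Fin d → ℝ}

theorem cell_mono (h : ∀ i, A i ⊆ B i) : cell A ⊆ cell B := by
  intro x hx
  obtain ⟨g, hg, rfl⟩ := (Set.mem_fintype_sum _ _).1 hx
  exact (Set.mem_fintype_sum _ _).2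
    ⟨g, fun i => convexHull_mono (Set.image_mono (coe_subset.2 (h i))) (hg i), rfl⟩

theorem IsPotential.dotProduct_le (hφ : IsPotential A B φ)
    (hc : c ∈ convexHull ℝ (stdVec '' (A i : Set (Fin d))))
    (hb : b ∈ convexHull ℝ (stdVec '' (B i : Set (Fin d)))) : φ ⬝ᵥ c ≤ φ ⬝ᵥ b := by
  rw [mem_convexHull_stdVec_iff] at hc hb
  exact dotProduct_le_dotProduct_of_stdSimplex hc.1 hb.1 fun u v hu hv =>
    hφ.le_of_mem (hc.2 u hu) (hb.2 v hv)

theorem IsPotential.mem_convexHull_inter (hφ : IsPotential A B φ)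
    (hc : c ∈ convexHull ℝ (stdVec '' (A i : Set (Fin d))))
    (hb : b ∈ convexHull ℝ (stdVec '' (B i : Set (Fin d)))) (hcb : φ ⬝ᵥ b ≤ φ ⬝ᵥ c) :
    c ∈ convexHull ℝ (stdVec '' ((A i ∩ B i : Finset (Fin d)) : Set (Fin d))) := by
  rw [mem_convexHull_stdVec_iff] at hc hb ⊢
  refine ⟨hc.1, fun u hu => mem_inter.2 ⟨hc.2 u hu, by_contra fun huB => ?_⟩⟩
  obtain ⟨v, -, hv⟩ := exists_ne_zero_of_sum_ne_zero (hb.1.2.symm ▸ one_ne_zero)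
  have huv : DirEdge A B u v := ⟨fun h => huB (h ▸ hb.2 v hv), i, hc.2 u hu, hb.2 v hv,
    fun h => huB (mem_inter.1 h.1).2⟩
  exact not_lt.2 hcb <| dotProduct_lt_dotProduct_of_stdSimplex hc.1 hb.1
    (fun u v hu hv => hφ.le_of_mem (hc.2 u hu) (hb.2 v hv)) hu hv (hφ.lt_of_dirEdge u v huv)

end Cell

theorem cell_inter_eq_cell_inter_general {n d : ℕ} (A B : NDType n d) (h : Acyclic A B) :
    cell A ∩ cell B = cell (fun i => A i ∩ B i) := by
  refine subset_antisymm ?_ (Set.subset_inter (cell_mono fun _ => inter_subset_left)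
    (cell_mono fun _ => inter_subset_right))
  rintro x ⟨hxA, hxB⟩
  obtain ⟨c, hc, rfl⟩ := (Set.mem_fintype_sum _ _).1 hxA
  obtain ⟨b, hb, hbc⟩ := (Set.mem_fintype_sum _ _).1 hxB
  obtain ⟨φ, hφ⟩ := h.exists_isPotential
  have hle : ∀ i ∈ univ, φ ⬝ᵥ c i ≤ φ ⬝ᵥ b i := fun i _ => hφ.dotProduct_le (hc i) (hb i)
  have heq : ∀ i ∈ univ, φ ⬝ᵥ c i = φ ⬝ᵥ b i :=
    (sum_eq_sum_iff_of_le hle).1 (by rw [← dotProduct_sum, ← dotProduct_sum, hbc])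
  exact (Set.mem_fintype_sum _ _).2
    ⟨c, fun i => hφ.mem_convexHull_inter (hc i) (hb i) (heq i (mem_univ i)).ge, rfl⟩

/-- If `CG(A,B)` is acyclic and every `A i ∩ B i` is
nonempty, then the Minkowski cells satisfy `C_A ∩ C_B = C_{A∩B}`. -/
theorem cell_inter_eq_cell_inter {n d : ℕ} (A B : NDType n d)
    (hA : IsType A) (hB : IsType B)
    (hne : ∀ i, (A i ∩ B i).Nonempty) (h : Acyclic A B) :
    cell A ∩ cell B = cell (fun i => A i ∩ B i) :=
  cell_inter_eq_cell_inter_general A B h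
end

section
/- Let A be an (n,d)-type and P an ordered partition of [d] such that the refinement B = A|P is a total refinement (all entries singletons). Then the Minkowski cell C_B is a vertex (a single point) of the Minkowski cell C_A, namely the point Σ_{i=1}^n e_{b_i} where B_i = {b_i}. -/
/-!
Weight each coordinate `j` by minus the index of the part of `P` containing it, and let `l` be
the corresponding linear functional. On the `i`-th summand `conv{e_j : j ∈ A i}` of `C_A`, the
vertex `e_{b i}` has weight `-m(i)` while every other `j ∈ A i` lies in a strictly later part, by
minimality of `m(i)` and since `A i ∩ P_{m(i)} = {b i}`. So `e_{b i}` is the strict maximiser of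
`l` on each summand, hence `∑ᵢ e_{b i}` is the strict maximiser of `l` on the Minkowski sum `C_A`,
and a strict maximiser of a linear functional is an extreme point.
-/

open Finset

open Pointwise

def IsStrictMaxOn {α β : Type*} [LT β] (f : α → β) (s : Set α) (x : α) : Prop :=
  ∀ y ∈ s, y ≠ x → f y < f x

lemma IsStrictMaxOn.le {α β : Type*} [Preorder β] {f : α → β} {s : Set α} {x y : α}
    (h : IsStrictMaxOn f s x) (hy : y ∈ s) : f y ≤ f x := by
  rcases eq_or_ne y x with rfl | hne
  · exact le_rfl
  · exact (h y hy hne).le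

section StrictMax

variable {E : Type*} [AddCommGroup E] [Module ℝ E]

lemma convex_setOf_eq_or_lt (l : E →ₗ[ℝ] ℝ) (x : E) :
    Convex ℝ {y | y = x ∨ l y < l x} := by
  have hlt : ∀ z, l z < l x → ∀ {a b : ℝ}, 0 < b → a + b = 1 → l (a • x + b • z) < l x := by
    intro z hz a b hb hab
    obtain rfl : a = 1 - b := by linarith
    rw [map_add, map_smul, map_smul, smul_eq_mul, smul_eq_mul]
    linarith [mul_lt_mul_of_pos_left hz hb]
  intro y hy z hz a b ha hb hab
  rcases hy with rfl | hy <;> rcases hz with rfl | hz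
  · exact Or.inl (Convex.combo_self hab _)
  · rcases hb.eq_or_lt with rfl | hb
    · simp_all
    · exact Or.inr (hlt z hz hb hab)
  · rcases ha.eq_or_lt with rfl | ha
    · simp_all
    · rw [add_comm] at hab ⊢
      exact Or.inr (hlt y hy ha hab)
  · exact Or.inr (convex_halfSpace_lt l.isLinear (l x) hy hz ha hb hab)

namespace IsStrictMaxOn

variable {l : E →ₗ[ℝ] ℝ}

lemma convexHull {s : Set E} {x : E} (h : IsStrictMaxOn l s x) :
    IsStrictMaxOn l (_root_.convexHull ℝ s) x := by
  have hsub : _root_.convexHull ℝ s ⊆ {y | y = x ∨ l y < l x} :=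
    convexHull_min (fun y hy => (eq_or_ne y x).imp id (h y hy)) (convex_setOf_eq_or_lt l x)
  exact fun y hy hne => (hsub hy).resolve_left hne

lemma fintype_sum {ι : Type*} [Fintype ι] {S : ι → Set E} {x : ι → E}
    (h : ∀ i, IsStrictMaxOn l (S i) (x i)) :
    IsStrictMaxOn l (∑ i, S i) (∑ i, x i) := by
  intro y hy hne
  obtain ⟨g, hg, rfl⟩ := (Set.mem_fintype_sum S y).mp hy
  obtain ⟨i, hi⟩ : ∃ i, g i ≠ x i := by
    by_contra! hgx
    exact hne (Finset.sum_congr rfl fun i _ => hgx i)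
  rw [map_sum, map_sum]
  exact Finset.sum_lt_sum (fun j _ => (h j).le (hg j)) ⟨i, mem_univ i, h i (g i) (hg i) hi⟩

lemma mem_extremePoints {s : Set E} {x : E} (h : IsStrictMaxOn l s x) (hx : x ∈ s) :
    x ∈ s.extremePoints ℝ := by
  refine _root_.mem_extremePoints.mpr ⟨hx, fun y hy z hz hxyz => ?_⟩
  obtain ⟨a, b, ha, hb, hab, rfl⟩ := hxyz
  have hcombo : l (a • y + b • z) = a * l y + b * l z := by
    rw [map_add, map_smul, map_smul, smul_eq_mul, smul_eq_mul]
  have hsum : a * l (a • y + b • z) + b * l (a • y + b • z) = l (a • y + b • z) := by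
    rw [← add_mul, hab, one_mul]
  have hy' := mul_le_mul_of_nonneg_left (h.le hy) ha.le
  have hz' := mul_le_mul_of_nonneg_left (h.le hz) hb.le
  constructor
  · by_contra hne
    linarith [mul_lt_mul_of_pos_left (h y hy hne) ha]
  · by_contra hne
    linarith [mul_lt_mul_of_pos_left (h z hz hne) hb]

end IsStrictMaxOn

end StrictMax

namespace IsOrderedPartition

variable {d k : ℕ} {P : Fin k → Finset (Fin d)}

noncomputable def partOf (hP : IsOrderedPartition P) (j : Fin d) : Fin k :=
  (hP.2.2 j).choose

lemma mem_partOf (hP : IsOrderedPartition P) (j : Fin d) : j ∈ P (hP.partOf j) :=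
  (hP.2.2 j).choose_spec

lemma partOf_eq (hP : IsOrderedPartition P) {j : Fin d} {a : Fin k} (hj : j ∈ P a) :
    hP.partOf j = a := by
  by_contra hne
  exact Finset.disjoint_left.mp (hP.2.1 _ _ hne) (hP.mem_partOf j) hj

end IsOrderedPartition

lemma IsRefinementBy.subset {n d k : ℕ} {A : NDType n d} {P : Fin k → Finset (Fin d)}
    {B : NDType n d} (hB : IsRefinementBy A P B) (i : Fin n) : B i ⊆ A i := by
  obtain ⟨a, -, -, hBi⟩ := hB i
  rw [hBi]
  exact inter_subset_left

lemma IsRefinementBy.partOf_lt {n d k : ℕ} {A : NDType n d} {P : Fin k → Finset (Fin d)}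
    (hP : IsOrderedPartition P) {B : NDType n d} (hB : IsRefinementBy A P B)
    {b : Fin n → Fin d} (hb : ∀ i, B i = {b i}) {i : Fin n} {j : Fin d} (hj : j ∈ A i)
    (hne : j ≠ b i) : hP.partOf (b i) < hP.partOf j := by
  obtain ⟨a, -, hmin, hBi⟩ := hB i
  have hAa : A i ∩ P a = {b i} := hBi.symm.trans (hb i)
  rw [hP.partOf_eq (mem_inter.mp (hAa ▸ mem_singleton_self (b i))).2]
  have hjP : j ∈ A i ∩ P (hP.partOf j) := mem_inter.mpr ⟨hj, hP.mem_partOf j⟩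
  refine lt_of_le_of_ne (not_lt.mp fun hlt => ?_) fun heq => hne ?_
  · simp [hmin _ hlt] at hjP
  · rwa [← heq, hAa, mem_singleton] at hjP

lemma linearCombination_stdVec {d : ℕ} (w : Fin d → ℝ) (j : Fin d) :
    Fintype.linearCombination ℝ w (stdVec j) = w j := by
  simp [stdVec]

lemma isStrictMaxOn_image_stdVec {d : ℕ} (w : Fin d → ℝ) {s : Set (Fin d)} {b : Fin d}
    (h : ∀ j ∈ s, j ≠ b → w j < w b) :
    IsStrictMaxOn (Fintype.linearCombination ℝ w) (stdVec '' s) (stdVec b) := by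
  rintro _ ⟨j, hj, rfl⟩ hne
  rw [linearCombination_stdVec, linearCombination_stdVec]
  exact h j hj fun hjb => hne (hjb ▸ rfl)

lemma sum_stdVec_mem_cell {n d : ℕ} {A : NDType n d} {b : Fin n → Fin d}
    (hb : ∀ i, b i ∈ A i) : ∑ i, stdVec (b i) ∈ cell A :=
  Set.finsetSum_mem_finsetSum _ _ _ fun i _ =>
    subset_convexHull ℝ _ (Set.mem_image_of_mem _ (hb i))

lemma cell_eq_singleton {n d : ℕ} {A : NDType n d} {b : Fin n → Fin d}
    (hb : ∀ i, A i = {b i}) : cell A = {∑ i, stdVec (b i)} := by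
  simp only [cell, hb, coe_singleton, Set.image_singleton, convexHull_singleton]
  exact Set.finsetSum_singleton _ _

theorem total_refinement_is_vertex_general {n d k : ℕ} (A : NDType n d)
    (P : Fin k → Finset (Fin d)) (hP : IsOrderedPartition P)
    (B : NDType n d) (hB : IsRefinementBy A P B)
    (b : Fin n → Fin d) (hb : ∀ i, B i = {b i}) :
    cell B = {∑ i, stdVec (b i)} ∧
    (∑ i, stdVec (b i)) ∈ Set.extremePoints ℝ (cell A) := by
  have hbA : ∀ i, b i ∈ A i := fun i => hB.subset i (by simp [hb i])
  let w : Fin d → ℝ := fun j => -(hP.partOf j : ℝ)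
  have hmax : IsStrictMaxOn (Fintype.linearCombination ℝ w) (cell A) (∑ i, stdVec (b i)) :=
    IsStrictMaxOn.fintype_sum fun i =>
      (isStrictMaxOn_image_stdVec w fun j hj hne => by
        simpa [w] using hB.partOf_lt hP hb hj hne).convexHull
  exact ⟨cell_eq_singleton hb, hmax.mem_extremePoints (sum_stdVec_mem_cell hbA)⟩

/-- If `B = A|P` is a total refinement, `B i = {b i}`, then
`C_B` is the single point `Σᵢ e_{b i}`, and this point is a vertex (extreme
point) of `C_A`. -/
theorem total_refinement_is_vertex {n d k : ℕ} (A : NDType n d) (hA : IsType A)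
    (P : Fin k → Finset (Fin d)) (hP : IsOrderedPartition P)
    (B : NDType n d) (hB : IsRefinementBy A P B)
    (b : Fin n → Fin d) (hb : ∀ i, B i = {b i}) :
    cell B = {∑ i, stdVec (b i)} ∧
    (∑ i, stdVec (b i)) ∈ Set.extremePoints ℝ (cell A) :=
  total_refinement_is_vertex_general A P hP B hB b hb
end

section
/- Let S be a mixed subdivision of nΔ^{d-1} and let A ≠ B be types of cells of S which agree in all coordinates except possibly coordinate i (i.e., A_j = B_j for all j ≠ i). Then every total refinement of the type C = A ∪ B (with C_i = A_i ∪ B_i and C_j = A_j for j ≠ i) is a total refinement of A or of B. -/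
open Finset

open Pointwise

/-!
If `T = C|P` and `T ≤ X ≤ C` componentwise, then also `T = X|P`: the parts of `P` missing `C j`
miss `X j`, and the first part meeting `C j` meets `X j` in exactly `T j`. The single element of
`T i` lies in `A i` or in `B i`, and whichever of `A`, `B` contains it is squeezed between `T`
and `A ∪ B`.
-/

namespace IsRefinementBy

variable {n d k : ℕ} {C X T : NDType n d} {P : Fin k → Finset (Fin d)}

theorem subset_s11 (h : IsRefinementBy C P T) (j : Fin n) : T j ⊆ C j := by
  obtain ⟨a, -, -, hT⟩ := h j
  exact hT ▸ inter_subset_left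

theorem of_subset_of_subset (h : IsRefinementBy C P T) (hXC : ∀ j, X j ⊆ C j)
    (hTX : ∀ j, T j ⊆ X j) : IsRefinementBy X P T := by
  intro j
  obtain ⟨a, hne, hlt, hT⟩ := h j
  have hTXa : T j ⊆ X j ∩ P a :=
    subset_inter (hTX j) (hT ▸ inter_subset_right)
  refine ⟨a, ?_, fun b hb => ?_, ?_⟩
  · exact (hT ▸ hne).mono hTXa
  · exact subset_empty.1 (hlt b hb ▸ inter_subset_inter (hXC j) le_rfl)
  · exact Subset.antisymm hTXa (hT ▸ inter_subset_inter (hXC j) le_rfl)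

end IsRefinementBy

theorem IsRefinement.subset_s11 {n d : ℕ} {C T : NDType n d} (h : IsRefinement T C) (j : Fin n) :
    T j ⊆ C j :=
  let ⟨_, _, _, hRef⟩ := h
  hRef.subset_s11 j

theorem IsTotalRefinement.of_subset_of_subset {n d : ℕ} {C X T : NDType n d}
    (h : IsTotalRefinement T C) (hXC : ∀ j, X j ⊆ C j) (hTX : ∀ j, T j ⊆ X j) :
    IsTotalRefinement T X := by
  obtain ⟨⟨k, P, hP, hRef⟩, hsing⟩ := h
  exact ⟨⟨k, P, hP, hRef.of_subset_of_subset hXC hTX⟩, hsing⟩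

theorem IsTotalRefinement.of_agree_off {n d : ℕ} {C X T : NDType n d} {i : Fin n}
    (h : IsTotalRefinement T C) (hagree : ∀ j, j ≠ i → X j = C j) (hXC : X i ⊆ C i)
    {t : Fin d} (hTi : T i = {t}) (ht : t ∈ X i) : IsTotalRefinement T X := by
  refine h.of_subset_of_subset (fun j => ?_) (fun j => ?_)
  all_goals by_cases hj : j = i
  · exact hj ▸ hXC
  · exact (hagree j hj).le
  · exact hj ▸ hTi ▸ singleton_subset_iff.2 ht
  · exact hagree j hj ▸ h.1.subset_s11 j

theorem total_refinement_of_union_general {n d : ℕ}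
    (A B : NDType n d)
    (i : Fin n) (hagree : ∀ j, j ≠ i → A j = B j)
    (T : NDType n d) (hT : IsTotalRefinement T (fun k => A k ∪ B k)) :
    IsTotalRefinement T A ∨ IsTotalRefinement T B := by
  obtain ⟨t, hTi⟩ := hT.2 i
  have ht : t ∈ A i ∪ B i := hT.1.subset_s11 i (hTi ▸ mem_singleton_self t)
  rcases mem_union.1 ht with htA | htB
  · refine Or.inl (hT.of_agree_off (fun j hj => ?_) subset_union_left hTi htA)
    rw [hagree j hj, union_self]
  · refine Or.inr (hT.of_agree_off (fun j hj => ?_) subset_union_right hTi htB)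
    rw [← hagree j hj, union_self]

/-- If `A ≠ B` are types of cells of a mixed subdivision of
`nΔ^{d-1}` agreeing in all coordinates except possibly coordinate `i`, then
every total refinement of `C = A ∪ B` (componentwise union) is a total
refinement of `A` or of `B`. -/
theorem total_refinement_of_union {n d : ℕ} (S : MixedSubdivision n d)
    (A B : NDType n d) (hA : A ∈ S.cells) (hB : B ∈ S.cells) (hAB : A ≠ B)
    (i : Fin n) (hagree : ∀ j, j ≠ i → A j = B j)
    (T : NDType n d) (hT : IsTotalRefinement T (fun k => A k ∪ B k)) :
    IsTotalRefinement T A ∨ IsTotalRefinement T B :=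
  total_refinement_of_union_general A B i hagree T hT
end

section
/- Let A be an (n,d)-type whose entries A_i are precisely A_i = {i, i+1 mod d} for i = 1,...,d = n (indices mod d, with representatives in [d]). Let B be the type with B_i = {i} or B_i = {i, i+1 mod d}, with B_d = {d}. Then the total refinement of B with respect to the ordered partition P = ({1},{2},...,{d}) is T = (1,2,...,d), and T ⊆ A componentwise but T is not a refinement of A. -/
open Finset

open Pointwise

/-- For `n = d`, let `A i = {i, i+1 mod d}`, let `B` have
entries `{i}` or `{i, i+1 mod d}` with last entry the singleton, and let
`T = (1,2,…,d)`. Then `T` is the refinement of `B` with respect to the ordered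
partition `({1},{2},…,{d})`, `T ⊆ A` componentwise, but `T` is not a
refinement of `A`. -/
theorem obstruction_configuration {m : ℕ}
    (A B T : NDType (m + 2) (m + 2))
    (hA : ∀ i : Fin (m + 2), A i = {i, i + 1})
    (hB : ∀ i : Fin (m + 2), B i = {i} ∨ B i = {i, i + 1})
    (hBlast : B (Fin.last (m + 1)) = {Fin.last (m + 1)})
    (hT : ∀ i : Fin (m + 2), T i = {i}) :
    IsRefinementBy B (fun a : Fin (m + 2) => ({a} : Finset (Fin (m + 2)))) T ∧
    (∀ i, T i ⊆ A i) ∧ ¬ IsRefinement T A := by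
  have hadd1 : ∀ i : Fin (m + 2), (i + 1 : Fin (m + 2)) ≠ i := by
    intro i h
    have hc := congrArg Fin.val h
    rw [Fin.val_add_one] at hc
    split_ifs at hc with hl
    · subst hl; simp at hc
    · omega
  refine ⟨?_, ?_, ?_⟩
  · intro i
    have hiB : i ∈ B i := by rcases hB i with h | h <;> simp [h]
    refine ⟨i, ⟨i, by simp [hiB]⟩, ?_, ?_⟩
    · intro b hb
      rw [Finset.eq_empty_iff_forall_notMem]
      intro x hx
      simp only [mem_inter, mem_singleton] at hx
      obtain ⟨hxB, rfl⟩ := hx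
      rcases hB i with h | h
      · rw [h, mem_singleton] at hxB
        exact absurd hxB (ne_of_lt hb)
      · rw [h] at hxB
        simp only [mem_insert, mem_singleton] at hxB
        rcases hxB with rfl | rfl
        · exact lt_irrefl _ hb
        · -- i + 1 < i : need i ≠ last
          by_cases hlast : i = Fin.last (m + 1)
          · rw [hlast] at h
            rw [hBlast] at h
            have : Fin.last (m + 1) + 1 ∈ ({Fin.last (m + 1)} : Finset (Fin (m + 2))) := by
              rw [h]; simp
            rw [mem_singleton] at this
            exact hadd1 _ this
          · have hlt : i < Fin.last (m + 1) := Fin.lt_last_iff_ne_last.mpr hlast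
            have hval : ((i + 1 : Fin (m + 2)) : ℕ) = i + 1 := Fin.val_add_one_of_lt hlt
            have : ((i + 1 : Fin (m + 2)) : ℕ) < (i : ℕ) := hb
            omega
    · rw [hT i]
      ext x
      simp only [mem_inter, mem_singleton]
      constructor
      · rintro rfl; exact ⟨hiB, rfl⟩
      · rintro ⟨_, rfl⟩; rfl
  · intro i
    rw [hT i, hA i]
    intro x hx
    rw [mem_singleton] at hx
    simp [hx]
  · rintro ⟨k, P, ⟨hPne, hPdisj, hPcov⟩, href⟩
    choose a h1 h2 h3 using href
    have hTeq : ∀ i : Fin (m + 2),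
        ({i} : Finset (Fin (m + 2))) = {i, i + 1} ∩ P (a i) := by
      intro i
      rw [← hT i, ← hA i]; exact h3 i
    have hmemP : ∀ i : Fin (m + 2), i ∈ P (a i) := by
      intro i
      have : i ∈ ({i} : Finset (Fin (m + 2))) := mem_singleton_self _
      rw [hTeq i] at this
      exact (mem_inter.mp this).2
    have hnmem : ∀ i : Fin (m + 2), i + 1 ∉ P (a i) := by
      intro i h
      have : i + 1 ∈ ({i} : Finset (Fin (m + 2))) := by
        rw [hTeq i]
        simp [h]
      rw [mem_singleton] at this
      exact hadd1 i this
    have key : ∀ i : Fin (m + 2), a i < a (i + 1) := by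
      intro i
      rcases lt_trichotomy (a i) (a (i + 1)) with h | h | h
      · exact h
      · exact absurd (h ▸ hmemP (i + 1)) (hnmem i)
      · exfalso
        have hemp := h2 i _ h
        rw [hA i] at hemp
        have : i + 1 ∈ ({i, i + 1} : Finset (Fin (m + 2))) ∩ P (a (i + 1)) := by
          simp [hmemP (i + 1)]
        rw [hemp] at this
        exact absurd this (notMem_empty _)
    obtain ⟨i0, hi0⟩ := Finite.exists_max a
    exact absurd (key i0) (not_lt.mpr (hi0 (i0 + 1)))
end

section
/- Let A be an (n,d)-type. The Minkowski cell C_A = Σ_{i=1}^n conv{e_j : j ∈ A_i} equals the set of points x ∈ ℝ^d expressible as x = Σ_{i=1}^n y^{(i)} with each y^{(i)} a convex combination of {e_j : j ∈ A_i}, and the integral points of C_A (points in ℤ^d ∩ C_A) are exactly the points Σ_{i=1}^n e_{b_i} over all choices b_i ∈ A_i... in particular every integral point of C_A is of the form Σ_i e_{b_i} with b_i ∈ A_i for all i. -/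
open Finset

open Pointwise

/-!
A point `x = ∑ᵢ yᵢ` of `C_A`, each `yᵢ` in the simplex on `A i`, is a nonnegative matrix `(yᵢⱼ)`
with unit row sums, column sums `xⱼ`, and `yᵢⱼ = 0` for `j ∉ A i`. If `x` is integral, take `xⱼ`
copies of column `j`. Any set `S` of rows puts mass `#S` on the columns it meets, so those
columns have at least `#S` copies, and Hall's theorem matches each row `i` injectively to a copy
of a column `bᵢ` with `yᵢ bᵢ ≠ 0`, so `bᵢ ∈ A i`. There are `n` rows and `∑ⱼ xⱼ = n` copies, so
every copy is matched and `x = ∑ᵢ e_{bᵢ}`.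
-/

section Transport

variable {ι κ : Type*} [Fintype ι] [Fintype κ]

theorem card_le_sum_colSum_of_rowSum_eq_one [DecidableEq κ] (y : ι → κ → ℝ)
    (hy0 : ∀ i j, 0 ≤ y i j) (hy1 : ∀ i, ∑ j, y i j = 1) (S : Finset ι) :
    (#S : ℝ) ≤ ∑ j ∈ S.biUnion (fun i => {j | y i j ≠ 0}), ∑ i, y i j := by
  set J := S.biUnion (fun i => {j | y i j ≠ 0})
  calc (#S : ℝ) = ∑ i ∈ S, ∑ j ∈ J, y i j := by
        rw [card_eq_sum_ones, Nat.cast_sum]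
        refine sum_congr rfl fun i hi => ?_
        rw [Nat.cast_one, ← hy1 i]
        refine (sum_subset (subset_univ J) fun j _ hj => ?_).symm
        by_contra h
        exact hj (mem_biUnion.2 ⟨i, hi, by simpa using h⟩)
    _ = ∑ j ∈ J, ∑ i ∈ S, y i j := sum_comm
    _ ≤ ∑ j ∈ J, ∑ i, y i j :=
        sum_le_sum fun j _ =>
          sum_le_sum_of_subset_of_nonneg (subset_univ S) fun i _ _ => hy0 i j

theorem sum_colSum_eq_card_of_rowSum_eq_one (y : ι → κ → ℝ) (hy1 : ∀ i, ∑ j, y i j = 1) :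
    ∑ j, ∑ i, y i j = Fintype.card ι := by
  rw [sum_comm]
  simp [hy1]

theorem exists_card_fiber_eq_of_rowSum_eq_one [DecidableEq κ] (y : ι → κ → ℝ)
    (hy0 : ∀ i j, 0 ≤ y i j) (hy1 : ∀ i, ∑ j, y i j = 1) (M : κ → ℕ) (hM : ∀ j, ∑ i, y i j = M j) :
    ∃ b : ι → κ, (∀ i, y i (b i) ≠ 0) ∧ ∀ j, #{i | b i = j} = M j := by
  classical
  let t : ι → Finset (Σ j, Fin (M j)) := fun i => {p | y i p.1 ≠ 0}
  have hall : ∀ S : Finset ι, #S ≤ #(S.biUnion t) := by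
    intro S
    have hS : S.biUnion t = (S.biUnion fun i => {j | y i j ≠ 0}).sigma fun _ => univ := by
      ext ⟨j, c⟩
      simp [t]
    rw [hS, card_sigma]
    simp only [card_univ, Fintype.card_fin]
    have h := card_le_sum_colSum_of_rowSum_eq_one y hy0 hy1 S
    simp only [hM] at h
    exact_mod_cast h
  obtain ⟨f, hf_inj, hf⟩ := (all_card_le_biUnion_card_iff_exists_injective t).1 hall
  refine ⟨fun i => (f i).1, fun i => by simpa [t] using hf i, ?_⟩
  have hle : ∀ j, #{i | (f i).1 = j} ≤ M j := fun j =>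
    calc #{i | (f i).1 = j} ≤ #(({j} : Finset κ).sigma fun j => (univ : Finset (Fin (M j)))) :=
          card_le_card_of_injOn f (fun i hi => by simpa using hi) hf_inj.injOn
      _ = M j := by simp
  have hsum : ∑ j, #{i | (f i).1 = j} = ∑ j, M j := by
    rw [← card_eq_sum_card_fiberwise fun i _ => mem_univ _, card_univ]
    exact_mod_cast ((sum_colSum_eq_card_of_rowSum_eq_one y hy1).symm.trans
      (sum_congr rfl fun j _ => hM j))
  exact fun j => (sum_eq_sum_iff_of_le fun j _ => hle j).1 hsum j (mem_univ j)

end Transport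

section StdVec

variable {d : ℕ}

theorem mem_stdSimplex_of_mem_convexHull_stdVec {s : Finset (Fin d)} {y : Fin d → ℝ}
    (h : y ∈ convexHull ℝ (stdVec '' (s : Set (Fin d)))) : y ∈ stdSimplex ℝ (Fin d) := by
  rw [← convexHull_basis_eq_stdSimplex]
  refine convexHull_mono ?_ h
  rintro _ ⟨j, -, rfl⟩
  exact ⟨j, funext fun k => by simp [stdVec, Pi.single_apply, eq_comm]⟩

theorem apply_eq_zero_of_mem_convexHull_stdVec {s : Finset (Fin d)} {y : Fin d → ℝ}
    (h : y ∈ convexHull ℝ (stdVec '' (s : Set (Fin d)))) {j : Fin d} (hj : j ∉ s) :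
    y j = 0 := by
  refine convexHull_min ?_ (convex_hyperplane (f := fun z : Fin d → ℝ => z j)
    ⟨fun _ _ => rfl, fun _ _ => rfl⟩ 0) h
  rintro _ ⟨k, hk, rfl⟩
  have hkj : j ≠ k := fun hjk => hj (hjk ▸ hk)
  simp [stdVec, hkj]

theorem sum_stdVec_apply {ι : Type*} [Fintype ι] (b : ι → Fin d) (j : Fin d) :
    (∑ i, stdVec (b i)) j = #{i | b i = j} := by
  simp [stdVec, Pi.single_apply, eq_comm]

end StdVec

theorem cell_description_general {n d : ℕ} (A : NDType n d) :
    cell A = {x | ∃ y : Fin n → (Fin d → ℝ),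
        (∀ i, y i ∈ convexHull ℝ (stdVec '' (A i : Set (Fin d)))) ∧
        x = ∑ i, y i} ∧
    (∀ x ∈ cell A, (∀ j, ∃ m : ℤ, x j = (m : ℝ)) →
      ∃ b : Fin n → Fin d, (∀ i, b i ∈ A i) ∧ x = ∑ i, stdVec (b i)) := by
  have hcell : cell A = {x | ∃ y : Fin n → (Fin d → ℝ),
      (∀ i, y i ∈ convexHull ℝ (stdVec '' (A i : Set (Fin d)))) ∧ x = ∑ i, y i} := by
    ext x
    simp only [cell, Set.mem_fintype_sum, Set.mem_ofPred_eq, exists_prop, eq_comm]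
  refine ⟨hcell, fun x hx hint => ?_⟩
  obtain ⟨y, hy, rfl⟩ := hcell ▸ hx
  have hy0 i j : 0 ≤ y i j := (mem_stdSimplex_of_mem_convexHull_stdVec (hy i)).1 j
  have hy1 i : ∑ j, y i j = 1 := (mem_stdSimplex_of_mem_convexHull_stdVec (hy i)).2
  have hM : ∀ j, ∃ M : ℕ, ∑ i, y i j = M := by
    intro j
    obtain ⟨m, hm⟩ := hint j
    rw [Finset.sum_apply] at hm
    lift m to ℕ using (by exact_mod_cast hm ▸ sum_nonneg fun i _ => hy0 i j)
    exact ⟨m, hm⟩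
  choose M hM using hM
  obtain ⟨b, hb, hfiber⟩ := exists_card_fiber_eq_of_rowSum_eq_one y hy0 hy1 M hM
  refine ⟨b, fun i => ?_, funext fun j => ?_⟩
  · by_contra h
    exact hb i (apply_eq_zero_of_mem_convexHull_stdVec (hy i) h)
  · rw [Finset.sum_apply, hM, sum_stdVec_apply, hfiber]

/-- The Minkowski cell `C_A` is the set of sums
`Σᵢ y i` with each `y i ∈ conv{e_j : j ∈ A i}`, and every integral point of
`C_A` is of the form `Σᵢ e_{b i}` with `b i ∈ A i` for all `i`. -/
theorem cell_description {n d : ℕ} (A : NDType n d) (hA : IsType A) :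
    cell A = {x | ∃ y : Fin n → (Fin d → ℝ),
        (∀ i, y i ∈ convexHull ℝ (stdVec '' (A i : Set (Fin d)))) ∧
        x = ∑ i, y i} ∧
    (∀ x ∈ cell A, (∀ j, ∃ m : ℤ, x j = (m : ℝ)) →
      ∃ b : Fin n → Fin d, (∀ i, b i ∈ A i) ∧ x = ∑ i, stdVec (b i)) :=
  cell_description_general A
end
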